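/- Let G be a finite group acting by automorphisms on a free abelian group of finite rank A. If the action is Engel, then the action is trivial: a • g = a for all a ∈ A and g ∈ G. -/

import Mathlib

/-!
Write the action of `g` as `1 + ν` in `End_ℤ(A)`. The Engel condition says each element is
killed by some power of `ν`, so `ν` is nilpotent because `A` is finitely generated. Since `g` has
finite order `m`, `(1 + ν)^m = 1`, i.e. `m • ν = -ν² c` for some `c`. If `ν^(k+2) = 0`, multiplying
by `ν^k` gives `m • ν^(k+1) = 0`, so `ν^(k+1) = 0` as `End_ℤ(A)` is torsion-free; descending, `ν = 0`.
-/

/-- Iterated generalized commutator for an action on an additive group: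
`addEngel a g 0 = a`, `addEngel a g (n+1) = [addEngel a g n, g]`,
where `[a,g] = -a + (a • g)`. -/
def addEngel {G A : Type*} [Group G] [AddCommGroup A] [DistribMulAction G A]
    (a : A) (g : G) : ℕ → A
  | 0 => a
  | n + 1 => g • addEngel a g n - addEngel a g n

section NilpotentOfFiniteOrder

variable {R : Type*} [Ring R]

theorem exists_one_add_pow_eq_one_add_nsmul_add_sq_mul (ν : R) (m : ℕ) :
    ∃ c : R, (1 + ν) ^ m = 1 + m • ν + ν ^ 2 * c := by
  induction m with
  | zero => exact ⟨0, by simp⟩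
  | succ m ih =>
    obtain ⟨c, hc⟩ := ih
    refine ⟨m • 1 + c + c * ν, ?_⟩
    rw [pow_succ, hc, succ_nsmul]
    noncomm_ring

theorem IsNilpotent.eq_zero_of_one_add_pow_eq_one [IsAddTorsionFree R] {ν : R}
    (hν : IsNilpotent ν) {m : ℕ} (hm : m ≠ 0) (h : (1 + ν) ^ m = 1) : ν = 0 := by
  obtain ⟨c, hc⟩ := exists_one_add_pow_eq_one_add_nsmul_add_sq_mul ν m
  have hmν : m • ν = -(ν ^ 2 * c) := by
    rw [h, add_assoc, left_eq_add] at hc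
    exact eq_neg_of_add_eq_zero_left hc
  have descend (k : ℕ) (hk : ν ^ (k + 2) = 0) : ν ^ (k + 1) = 0 := by
    refine nsmul_right_injective hm ?_
    calc m • ν ^ (k + 1) = ν ^ k * (m • ν) := by rw [_root_.pow_succ, mul_smul_comm]
      _ = -(ν ^ (k + 2) * c) := by rw [hmν, mul_neg, ← mul_assoc, ← pow_add]
      _ = m • 0 := by rw [hk, zero_mul, neg_zero, smul_zero]
  have vanish (k : ℕ) (hk : ν ^ (k + 1) = 0) : ν = 0 := by
    induction k with
    | zero => rwa [pow_one] at hk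
    | succ k ih => exact ih (descend k hk)
  obtain ⟨n, hn⟩ := hν
  exact vanish n (by rw [_root_.pow_succ, hn, zero_mul])

end NilpotentOfFiniteOrder

theorem addEngel_eq_pow_apply {G A : Type*} [Group G] [AddCommGroup A] [DistribMulAction G A]
    (a : A) (g : G) (n : ℕ) :
    addEngel a g n = ((DistribMulAction.toModuleEnd ℤ A g - 1) ^ n) a := by
  induction n with
  | zero => rfl
  | succ n ih => rw [addEngel, ih, pow_succ', Module.End.mul_apply]; rfl

theorem stmt_3 {G A : Type*} [Group G] [Finite G] [AddCommGroup A]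
    [Module.Free ℤ A] [Module.Finite ℤ A] [DistribMulAction G A]
    (hEngel : ∀ (a : A) (g : G), ∃ n, 1 ≤ n ∧ addEngel a g n = 0) :
    ∀ (a : A) (g : G), g • a = a := by
  intro a g
  set ρ := DistribMulAction.toModuleEnd ℤ A g
  have hnil : IsNilpotent (ρ - 1) := Module.End.isNilpotent_iff_of_finite.mpr fun b =>
    (hEngel b g).imp fun n hn => addEngel_eq_pow_apply b g n ▸ hn.2
  have hpow : (1 + (ρ - 1)) ^ Nat.card G = 1 := by
    rw [add_sub_cancel, ← map_pow, pow_card_eq_one', map_one]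
  have : IsAddTorsionFree (Module.End ℤ A) := .of_isTorsionFree ℤ _
  have hρ : ρ = 1 := sub_eq_zero.mp (hnil.eq_zero_of_one_add_pow_eq_one Nat.card_pos.ne' hpow)
  exact congrArg (fun f : Module.End ℤ A => f a) hρ
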